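/- For every integer M ≥ 1, every constellation x : Fin M → ℂ and every σ > 0, the constellation-constrained secrecy capacity function s ↦ C_σ(s) is continuous on [0, ∞). -/

import Mathlib

/-! By dominated convergence each `s ↦ g_i(σ, s)` is continuous on `ℝ`. The integrand is jointly
continuous in `(s, w)`. Every summand is at most `1`, and the `j = i` summand is `exp (-|w|²)`
(it is `1` when `σ = 0`), so `|log₂ Σ| ≤ |w|² / log 2 + log₂ M`, a `γ`-integrable bound
independent of `s`. -/

open MeasureTheory Real

/-- The standard complex Gaussian probability measure on ℂ:
density `w ↦ (1/π)·exp(−|w|²)` with respect to Lebesgue measure on ℂ ≅ ℝ². -/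
noncomputable def gaussianC : Measure ℂ :=
  MeasureTheory.volume.withDensity
    (fun w => ENNReal.ofReal (π⁻¹ * Real.exp (-(‖w‖) ^ 2)))

/-- The expectation term
`g_i(σ, s) = ∫_ℂ log₂( Σ_j exp( −|σ·w + √s·(x i − x j)|² / σ² ) ) dγ(w)`. -/
noncomputable def g (M : ℕ) (x : Fin M → ℂ) (σ s : ℝ) (i : Fin M) : ℝ :=
  ∫ w : ℂ,
    Real.logb 2 (∑ j : Fin M,
      Real.exp (-(‖(σ : ℂ) * w + (Real.sqrt s : ℂ) * (x i - x j)‖) ^ 2 / σ ^ 2))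
    ∂gaussianC

/-- The constellation-constrained secrecy capacity
`C_σ(s) = (1/M)·Σ_i ( g_i(σ, s) − g_i(1, s) )`. -/
noncomputable def Ccc (M : ℕ) (x : Fin M → ℂ) (σ s : ℝ) : ℝ :=
  (1 / (M : ℝ)) * ∑ i : Fin M, (g M x σ s i - g M x 1 s i)

open Finset

lemma Complex.integrable_mul_re_im {f g : ℝ → ℝ} (hf : Integrable f) (hg : Integrable g) :
    Integrable (fun w : ℂ => f w.re * g w.im) := by
  have h : Integrable (fun p : ℝ × ℝ => f p.1 * g p.2) := by
    rw [Measure.volume_eq_prod]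
    exact hf.mul_prod hg
  exact (Complex.volume_preserving_equiv_real_prod.integrable_comp_emb
    Complex.measurableEquivRealProd.measurableEmbedding).2 h

lemma integrable_exp_neg_norm_sq : Integrable (fun w : ℂ => exp (-‖w‖ ^ 2)) := by
  refine (Complex.integrable_mul_re_im (integrable_exp_neg_mul_sq one_pos)
    (integrable_exp_neg_mul_sq one_pos)).congr (.of_forall fun w => ?_)
  simp only [Complex.sq_norm, Complex.normSq_apply, ← exp_add]
  ring_nf

lemma integrable_norm_sq_mul_exp_neg_norm_sq :
    Integrable (fun w : ℂ => ‖w‖ ^ 2 * exp (-‖w‖ ^ 2)) := by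
  have hsq : Integrable (fun t : ℝ => t ^ 2 * exp (-1 * t ^ 2)) := by
    simpa [rpow_two] using integrable_rpow_mul_exp_neg_mul_sq one_pos (s := 2) (by norm_num)
  have hexp := integrable_exp_neg_mul_sq one_pos
  refine ((Complex.integrable_mul_re_im hsq hexp).add
    (Complex.integrable_mul_re_im hexp hsq)).congr (.of_forall fun w => ?_)
  simp only [Pi.add_apply, Complex.sq_norm, Complex.normSq_apply, neg_add, exp_add]
  ring_nf

instance : IsFiniteMeasure gaussianC :=
  isFiniteMeasure_withDensity_ofReal (integrable_exp_neg_norm_sq.const_mul π⁻¹).2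

lemma integrable_norm_sq_gaussianC : Integrable (fun w : ℂ => ‖w‖ ^ 2) gaussianC := by
  rw [gaussianC, integrable_withDensity_iff (by fun_prop)
    (.of_forall fun _ => ENNReal.ofReal_lt_top)]
  refine (integrable_norm_sq_mul_exp_neg_norm_sq.const_mul π⁻¹).congr (.of_forall fun w => ?_)
  dsimp only
  rw [ENNReal.toReal_ofReal (by positivity)]
  ring

lemma abs_logb_sum_exp_neg_le {ι : Type*} [Fintype ι] {β : ℝ} (hβ : 1 < β) {a : ι → ℝ}
    (ha : ∀ j, 0 ≤ a j) (i : ι) {b : ℝ} (hb : a i ≤ b) :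
    |logb β (∑ j, exp (-a j))| ≤ b / log β + logb β (Fintype.card ι) := by
  have hlow : exp (-b) ≤ ∑ j, exp (-a j) :=
    (exp_le_exp.2 (neg_le_neg hb)).trans
      (single_le_sum (f := fun j => exp (-a j)) (fun j _ => (exp_pos _).le) (mem_univ i))
  have hup : ∑ j, exp (-a j) ≤ Fintype.card ι := by
    simpa using sum_le_sum fun j (_ : j ∈ univ) => exp_le_one_iff.2 (neg_nonpos.2 (ha j))
  have hpos : 0 < ∑ j, exp (-a j) := (exp_pos _).trans_le hlow
  have hcard : 0 ≤ logb β (Fintype.card ι) :=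
    logb_nonneg hβ (by exact_mod_cast Fintype.card_pos_iff.2 ⟨i⟩)
  have hb' : 0 ≤ b / log β := div_nonneg ((ha i).trans hb) (log_nonneg hβ.le)
  rw [abs_le]
  constructor
  · have := logb_le_logb_of_le hβ (exp_pos _) hlow
    rw [logb, log_exp, neg_div] at this
    linarith
  · linarith [logb_le_logb_of_le hβ hpos hup]

lemma norm_ofReal_mul_sq_div_sq_le (τ : ℝ) (w : ℂ) : ‖(τ : ℂ) * w‖ ^ 2 / τ ^ 2 ≤ ‖w‖ ^ 2 := by
  rcases eq_or_ne τ 0 with rfl | hτ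
  · simp
  · rw [norm_mul, Complex.norm_real, norm_eq_abs, mul_pow, sq_abs,
      mul_div_cancel_left₀ _ (pow_ne_zero 2 hτ)]

theorem continuous_g (M : ℕ) (x : Fin M → ℂ) (τ : ℝ) (i : Fin M) :
    Continuous fun s => g M x τ s i := by
  let F : ℝ → ℂ → ℝ := fun s w => logb 2 (∑ j : Fin M,
    exp (-(‖(τ : ℂ) * w + (√s : ℂ) * (x i - x j)‖) ^ 2 / τ ^ 2))
  change Continuous fun s => ∫ w, F s w ∂gaussianC
  have hF : Continuous (Function.uncurry F) :=
    Continuous.logb (by fun_prop) fun p => (sum_pos (fun j _ => exp_pos _) ⟨i, mem_univ i⟩).ne'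
  have hF_bound : ∀ s w, ‖F s w‖ ≤ ‖w‖ ^ 2 / log 2 + logb 2 M := by
    intro s w
    simp only [F, neg_div, norm_eq_abs]
    simpa using abs_logb_sum_exp_neg_le one_lt_two (fun j => by positivity) i
      (b := ‖w‖ ^ 2) (by simpa using norm_ofReal_mul_sq_div_sq_le τ w)
  exact continuous_of_dominated (fun s => (hF.uncurry_left s).aestronglyMeasurable)
    (fun s => .of_forall (hF_bound s))
    ((integrable_norm_sq_gaussianC.div_const _).add (integrable_const _))
    (.of_forall fun w => hF.uncurry_right w)

theorem ccsc_continuousOn_general (M : ℕ) (x : Fin M → ℂ) (σ : ℝ) :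
    ContinuousOn (fun s => Ccc M x σ s) (Set.Ici (0 : ℝ)) :=
  (continuous_const.mul (continuous_finsetSum _ fun i _ =>
    (continuous_g M x σ i).sub (continuous_g M x 1 i))).continuousOn

theorem ccsc_continuousOn (M : ℕ) (hM : 1 ≤ M) (x : Fin M → ℂ) (σ : ℝ) (hσ : 0 < σ) :
    ContinuousOn (fun s => Ccc M x σ s) (Set.Ici (0 : ℝ)) :=
  ccsc_continuousOn_general M x σ
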